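/- Let $R$ be a Noetherian ring and $I$ an ideal such that the extended Rees algebra $S = \oplus_{n\geq 0} \overline{I^n}$ of integral closures is Noetherian. Suppose there exists $k \geq 1$ with $\overline{I^{nk}} = (\overline{I^k})^n$ for all $n \geq 1$. Then there exists a constant $e \geq 0$ such that $\overline{I^m} \subseteq I^{m - e}$ for all $m \geq e$; in particular the filtrations $\{\overline{I^n}\}$ and $\{I^n\}$ are cofinal. -/

import Mathlib

/-- The integral closure of an ideal `I`: the ideal of all elements `x` satisfying an
equation of integral dependence `xⁿ + a₁ xⁿ⁻¹ + ⋯ + aₙ = 0` with `aᵢ ∈ Iⁱ`.  (The set of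
such elements is already an ideal, so taking the span does not change it.) -/
def idealIntCl {R : Type*} [CommRing R] (I : Ideal R) : Ideal R :=
  Ideal.span {x : R | ∃ n : ℕ, 0 < n ∧ ∃ a : ℕ → R,
    (∀ i, 1 ≤ i → i ≤ n → a i ∈ I ^ i) ∧
    x ^ n + ∑ i ∈ Finset.Icc 1 n, a i * x ^ (n - i) = 0}

/-- The graded ring `⊕ₙ Iₙ` associated to a multiplicative decreasing filtration of
ideals of `R` with `I 0 = R`, realized as the subalgebra of `R[X]` consisting of the
polynomials whose `n`-th coefficient lies in `I n`. -/
def filtRees (R : Type*) [CommRing R] (I : ℕ → Ideal R)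
    (hmul : ∀ m n, I m * I n ≤ I (m + n)) (h0 : I 0 = ⊤) :
    Subalgebra R (Polynomial R) where
  carrier := {p | ∀ n, p.coeff n ∈ I n}
  add_mem' := fun {p q} hp hq n => by
    simpa [Polynomial.coeff_add] using (I n).add_mem (hp n) (hq n)
  mul_mem' := fun {p q} hp hq n => by
    rw [Polynomial.coeff_mul]
    refine Submodule.sum_mem _ fun c hc => ?_
    replace hc : c.1 + c.2 = n := by simpa using hc
    have h := Ideal.mul_mem_mul (hp c.1) (hq c.2)
    exact hc ▸ hmul c.1 c.2 h
  algebraMap_mem' := fun r n => by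
    rcases Nat.eq_zero_or_pos n with h | h
    · subst h
      simp [h0]
    · simp [Polynomial.coeff_C, Nat.pos_iff_ne_zero.mp h]

/-!
Write `t` for the variable of `R[X]`. An element `x ∈ cl(Iᵐ)` gives an element `x tᵐ` integral
over the Rees algebra `R[It]`: homogenise its equation of integral dependence. Noetherianity of
`S = ⊕ₙ cl(Iⁿ)` makes the chain of ideals of `S` generated by the homogeneous pieces of degrees
`1, …, n` stabilise at some `N`, whence `cl(Iᵈ) = ∑_{1 ≤ m ≤ N} cl(I^{d-m}) cl(Iᵐ)` for `d > N`.
So `S` lies in the `R[It]`-algebra generated by finitely many integral monomials `x tᵐ` with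
`m ≤ N`, a finite `R[It]`-module. If its generators have degree at most `e`, each of its
degree-`m` coefficients lies in `I^{m-e}`.
-/

open Polynomial

section IdealIntCl

variable {R : Type*} [CommRing R]

theorem idealIntCl_mono {I J : Ideal R} (h : I ≤ J) : idealIntCl I ≤ idealIntCl J :=
  Ideal.span_mono fun _ ⟨n, hn, a, ha, heq⟩ =>
    ⟨n, hn, a, fun i h1 h2 => Ideal.pow_right_mono h i (ha i h1 h2), heq⟩

theorem antitone_idealIntCl_pow (I : Ideal R) : Antitone fun n => idealIntCl (I ^ n) :=
  fun _ _ h => idealIntCl_mono (Ideal.pow_le_pow_right h)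

theorem isIntegral_monomial_of_eq_zero {I : Ideal R} {m ν : ℕ} (hν : 0 < ν) {a : ℕ → R}
    (ha : ∀ i, 1 ≤ i → i ≤ ν → a i ∈ (I ^ m) ^ i) {x : R}
    (hx : x ^ ν + ∑ i ∈ Finset.Icc 1 ν, a i * x ^ (ν - i) = 0) :
    IsIntegral (reesAlgebra I) (monomial m x) := by
  have hmem (i) (hi : i ∈ Finset.Icc 1 ν) : monomial (m * i) (a i) ∈ reesAlgebra I :=
    reesAlgebra.monomial_mem.mpr
      (pow_mul I m i ▸ ha i (Finset.mem_Icc.mp hi).1 (Finset.mem_Icc.mp hi).2)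
  refine ⟨X ^ ν + ∑ i ∈ (Finset.Icc 1 ν).attach, C ⟨_, hmem i i.2⟩ * X ^ (ν - i), ?_, ?_⟩
  · refine monic_X_pow_add ((degree_sum_le _ _).trans_lt ?_)
    refine (Finset.sup_lt_iff (WithBot.bot_lt_coe ν)).mpr fun i _ => ?_
    have hi := Finset.mem_Icc.mp i.2
    exact (degree_C_mul_X_pow_le _ _).trans_lt (WithBot.coe_lt_coe.mpr (Nat.sub_lt hν hi.1))
  · have key (i) (hi : i ∈ Finset.Icc 1 ν) :
        monomial (m * i) (a i) * monomial m x ^ (ν - i) = monomial (m * ν) (a i * x ^ (ν - i)) := by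
      rw [monomial_pow, monomial_mul_monomial, ← Nat.mul_add,
        Nat.add_sub_cancel' (Finset.mem_Icc.mp hi).2]
    simp only [eval₂_add, eval₂_pow, eval₂_X, eval₂_finsetSum, eval₂_mul, eval₂_C,
      Subalgebra.algebraMap_mk, Algebra.algebraMap_self, RingHom.id_apply]
    rw [(Finset.sum_attach _ _).trans (Finset.sum_congr rfl key), monomial_pow, ← map_sum,
      ← map_add, hx, map_zero]

theorem isIntegral_monomial_of_mem_idealIntCl {I : Ideal R} {m : ℕ} {x : R}
    (hx : x ∈ idealIntCl (I ^ m)) : IsIntegral (reesAlgebra I) (monomial m x) := by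
  let integralCoeffs : Ideal R := (Subalgebra.toSubmodule
    ((integralClosure (reesAlgebra I) R[X]).restrictScalars R)).comap (monomial m)
  refine (Ideal.span_le (I := integralCoeffs)).mpr ?_ hx
  rintro x ⟨ν, hν, a, ha, hx⟩
  exact isIntegral_monomial_of_eq_zero hν ha hx

end IdealIntCl

section Filtration

variable {R : Type*} [CommRing R] {J : ℕ → Ideal R}

theorem monomial_mem_filtRees (hmul : ∀ m n, J m * J n ≤ J (m + n)) (h0 : J 0 = ⊤) {n : ℕ}
    {x : R} (hx : x ∈ J n) : monomial n x ∈ filtRees R J hmul h0 := by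
  intro d
  rw [coeff_monomial]
  split_ifs with h
  · exact h ▸ hx
  · exact zero_mem _

theorem mul_sum_mul_le (hmul : ∀ m n, J m * J n ≤ J (m + n)) (hanti : Antitone J) (s : Finset ℕ)
    (i j : ℕ) : J i * ∑ m ∈ s, J (j - m) * J m ≤ ∑ m ∈ s, J (i + j - m) * J m := by
  rw [Finset.mul_sum]
  refine Finset.sum_le_sum fun m _ => ?_
  rw [← mul_assoc]
  exact Ideal.mul_mono_left ((hmul i (j - m)).trans (hanti (by omega)))

theorem exists_le_sum_mul_of_isNoetherianRing (hmul : ∀ m n, J m * J n ≤ J (m + n))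
    (h0 : J 0 = ⊤) (hanti : Antitone J) [IsNoetherianRing (filtRees R J hmul h0)] :
    ∃ N, ∀ d, N < d → J d ≤ ∑ m ∈ Finset.Icc 1 N, J (d - m) * J m := by
  let gen : ℕ →o Ideal (filtRees R J hmul h0) :=
    ⟨fun n => Ideal.span {s | ∃ m ∈ Finset.Icc 1 n, ∃ x ∈ J m, (s : R[X]) = monomial m x},
      fun a b hab => Ideal.span_mono fun s ⟨m, hm, hs⟩ =>
        ⟨m, Finset.Icc_subset_Icc_right hab hm, hs⟩⟩
  obtain ⟨N, hN⟩ := monotone_stabilizes_iff_noetherian.mpr inferInstance gen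
  have hcoeff : ∀ s ∈ gen N, ∀ d, (s : R[X]).coeff d ∈ ∑ m ∈ Finset.Icc 1 N, J (d - m) * J m := by
    intro s hs
    induction hs using Submodule.span_induction with
    | mem s hs =>
      obtain ⟨m, hm, x, hx, hs⟩ := hs
      intro d
      rw [hs, coeff_monomial]
      split_ifs with h
      · subst h
        rw [Ideal.sum_eq_sup]
        refine Finset.le_sup (f := fun m' => J (m - m') * J m') hm ?_
        rwa [Nat.sub_self, h0, Ideal.top_mul]
      · exact zero_mem _
    | zero => simp
    | add s t _ _ hs ht => intro d; exact add_mem (hs d) (ht d)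
    | smul a s _ hs =>
      intro d
      rw [smul_eq_mul, Subalgebra.coe_mul, coeff_mul]
      refine Submodule.sum_mem _ fun c hc => ?_
      rw [Finset.HasAntidiagonal.mem_antidiagonal] at hc
      exact hc ▸ mul_sum_mul_le hmul hanti _ c.1 c.2 (Ideal.mul_mem_mul (a.2 c.1) (hs c.2))
  refine ⟨N, fun d hd x hx => ?_⟩
  have hgen : ⟨monomial d x, monomial_mem_filtRees hmul h0 hx⟩ ∈ gen N :=
    (hN d hd.le).symm ▸ Ideal.subset_span ⟨d, Finset.mem_Icc.mpr ⟨by omega, le_rfl⟩, x, hx, rfl⟩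
  simpa using hcoeff _ hgen d

theorem le_comap_monomial_of_le_sum_mul {N : ℕ}
    (hN : ∀ d, N < d → J d ≤ ∑ m ∈ Finset.Icc 1 N, J (d - m) * J m) {T : Subalgebra R R[X]}
    (hT : ∀ m ≤ N, J m ≤ (Subalgebra.toSubmodule T).comap (monomial m)) (n : ℕ) :
    J n ≤ (Subalgebra.toSubmodule T).comap (monomial n) := by
  induction n using Nat.strong_induction_on with
  | _ n ih =>
  rcases le_or_gt n N with hn | hn
  · exact hT n hn
  refine (hN n hn).trans ?_
  rw [Ideal.sum_eq_sup]
  refine Finset.sup_le fun m hm => Ideal.mul_le.mpr fun y hy z hz => ?_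
  have hm := Finset.mem_Icc.mp hm
  change monomial n (y * z) ∈ T
  rw [← Nat.sub_add_cancel (hm.2.trans hn.le), ← monomial_mul_monomial]
  exact T.mul_mem (ih _ (by omega) hy) (ih m (by omega) hz)

theorem exists_fg_forall_monomial_mem [IsNoetherianRing R] {A : Subalgebra R R[X]} {N : ℕ}
    (hN : ∀ d, N < d → J d ≤ ∑ m ∈ Finset.Icc 1 N, J (d - m) * J m)
    (hint : ∀ m, ∀ x ∈ J m, IsIntegral A (monomial m x)) :
    ∃ M : Submodule A R[X], M.FG ∧ ∀ n, ∀ x ∈ J n, monomial n x ∈ M := by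
  classical
  choose F hF using fun m => IsNoetherian.noetherian (J m)
  let G : Finset R[X] := (Finset.range (N + 1)).biUnion fun m => (F m).image (monomial m)
  let T := Algebra.adjoin A (G : Set R[X])
  refine ⟨Subalgebra.toSubmodule T, fg_adjoin_of_finite G.finite_toSet ?_,
    fun n x hx => le_comap_monomial_of_le_sum_mul hN (T := T.restrictScalars R) ?_ n hx⟩
  · intro g hg
    simp only [G, Finset.coe_biUnion, Finset.coe_image, Set.mem_iUnion, Set.mem_image] at hg
    obtain ⟨m, -, y, hy, rfl⟩ := hg
    exact hint m y (hF m ▸ Submodule.subset_span hy)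
  · intro m hm
    rw [← hF m, Submodule.span_le]
    intro y hy
    refine Algebra.subset_adjoin ?_
    simp only [G, Finset.coe_biUnion, Finset.coe_image, Set.mem_iUnion, Set.mem_image]
    exact ⟨m, Finset.mem_range.mpr (by omega), y, hy, rfl⟩

end Filtration

theorem exists_coeff_mem_pow_sub_of_fg {R : Type*} [CommRing R] {I : Ideal R}
    {M : Submodule (reesAlgebra I) R[X]} (hM : M.FG) :
    ∃ D, ∀ p ∈ M, ∀ d, p.coeff d ∈ I ^ (d - D) := by
  obtain ⟨Fs, rfl⟩ := hM
  let D := Fs.sup natDegree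
  refine ⟨D, fun p hp => ?_⟩
  induction hp using Submodule.span_induction with
  | mem f hf =>
    intro d
    rcases le_or_gt d D with hd | hd
    · rw [Nat.sub_eq_zero_of_le hd, pow_zero, Ideal.one_eq_top]
      exact Submodule.mem_top
    · rw [coeff_eq_zero_of_natDegree_lt ((Finset.le_sup hf).trans_lt hd)]
      exact zero_mem _
  | zero => simp
  | add p q _ _ hp hq => intro d; exact add_mem (hp d) (hq d)
  | smul a p _ hp =>
    intro d
    rw [Subalgebra.smul_def, smul_eq_mul, coeff_mul]
    refine Submodule.sum_mem _ fun c hc => ?_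
    rw [Finset.HasAntidiagonal.mem_antidiagonal] at hc
    refine Ideal.pow_le_pow_right (show d - D ≤ c.1 + (c.2 - D) by omega) ?_
    rw [pow_add]
    exact Ideal.mul_mem_mul (a.2 c.1) (hp c.2)

theorem intCl_filtration_cofinal_general {R : Type*} [CommRing R] [IsNoetherianRing R]
    (I : Ideal R)
    (hmul : ∀ m n, idealIntCl (I ^ m) * idealIntCl (I ^ n) ≤ idealIntCl (I ^ (m + n)))
    (h0 : idealIntCl (I ^ 0) = ⊤)
    (hS : IsNoetherianRing (filtRees R (fun n => idealIntCl (I ^ n)) hmul h0)) :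
    (∃ e : ℕ, ∀ m : ℕ, e ≤ m → idealIntCl (I ^ m) ≤ I ^ (m - e)) ∧
      ∀ j : ℕ, ∃ n : ℕ, idealIntCl (I ^ n) ≤ I ^ j := by
  obtain ⟨N, hN⟩ := exists_le_sum_mul_of_isNoetherianRing hmul h0 (antitone_idealIntCl_pow I)
  obtain ⟨M, hMfg, hM⟩ := exists_fg_forall_monomial_mem (A := reesAlgebra I) hN
    fun _ _ => isIntegral_monomial_of_mem_idealIntCl
  obtain ⟨e, he⟩ := exists_coeff_mem_pow_sub_of_fg hMfg
  have hle (m : ℕ) : idealIntCl (I ^ m) ≤ I ^ (m - e) := fun x hx => by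
    simpa using he _ (hM m x hx) m
  exact ⟨⟨e, fun m _ => hle m⟩, fun j => ⟨j + e, by simpa using hle (j + e)⟩⟩

/-- Let `R` be Noetherian and `I` an ideal such that the Rees algebra
`S = ⊕ₙ (integral closure of Iⁿ)` is Noetherian.  Suppose there is `k ≥ 1` with
`cl(Iⁿᵏ) = (cl(Iᵏ))ⁿ` for all `n ≥ 1`.  Then there is a constant `e` such that
`cl(Iᵐ) ⊆ I^{m-e}` for all `m ≥ e`; in particular the filtrations `{cl(Iⁿ)}` and `{Iⁿ}`
are cofinal. -/
theorem intCl_filtration_cofinal {R : Type*} [CommRing R] [IsNoetherianRing R]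
    (I : Ideal R)
    (hmul : ∀ m n, idealIntCl (I ^ m) * idealIntCl (I ^ n) ≤ idealIntCl (I ^ (m + n)))
    (h0 : idealIntCl (I ^ 0) = ⊤)
    (hS : IsNoetherianRing (filtRees R (fun n => idealIntCl (I ^ n)) hmul h0))
    (k : ℕ) (hk : 1 ≤ k)
    (hpow : ∀ n : ℕ, 1 ≤ n → idealIntCl (I ^ (n * k)) = idealIntCl (I ^ k) ^ n) :
    (∃ e : ℕ, ∀ m : ℕ, e ≤ m → idealIntCl (I ^ m) ≤ I ^ (m - e)) ∧
      ∀ j : ℕ, ∃ n : ℕ, idealIntCl (I ^ n) ≤ I ^ j :=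
  intCl_filtration_cofinal_general I hmul h0 hS
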